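/- Let w ∈ ℝ³ and let U be a symmetric traceless 3×3 real matrix. Then (1/2)|w|² = (3/2) λ_max(w ⊗ w − U) if and only if U = w ⊗ w − (1/3)|w|² I. -/

import Mathlib

/-!
`A := w ⊗ w − U` is symmetric with trace `|w|²`, so its eigenvalues have mean `|w|² / 3`. The
hypothesis says that the largest eigenvalue equals this mean, which forces all three eigenvalues to
be `|w|² / 3`; by the spectral theorem this means `A = (|w|² / 3) I`.
-/

/-- The maximal eigenvalue of a (Hermitian, i.e. real symmetric) matrix. -/
noncomputable def lamMax (A : Matrix (Fin 3) (Fin 3) ℝ) : ℝ :=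
  if h : A.IsHermitian then ⨆ i, h.eigenvalues i else 0

open Matrix

theorem ciSup_eq_iff_eq_const_of_sum_eq {ι α : Type*} [Fintype ι] [Nonempty ι]
    [ConditionallyCompleteLinearOrder α] [AddCommMonoid α] [IsOrderedCancelAddMonoid α]
    {f : ι → α} {c : α} (hsum : ∑ i, f i = Fintype.card ι • c) :
    ⨆ i, f i = c ↔ f = Function.const ι c := by
  refine ⟨fun hsup ↦ funext fun i ↦ ?_, fun hf ↦ hf ▸ ciSup_const⟩
  have hle : ∀ i ∈ Finset.univ, f i ≤ c :=
    fun i _ ↦ hsup ▸ le_ciSup (Finite.bddAbove_range f) i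
  rw [← Finset.card_univ, ← Finset.sum_const, Finset.sum_eq_sum_iff_of_le hle] at hsum
  exact hsum i (Finset.mem_univ i)

namespace Matrix.IsHermitian

variable {𝕜 n : Type*} [RCLike 𝕜] [Fintype n] [DecidableEq n] {A : Matrix n n 𝕜}

theorem eigenvalues_eq_const_iff (hA : A.IsHermitian) (c : ℝ) :
    hA.eigenvalues = Function.const n c ↔ A = c • (1 : Matrix n n 𝕜) := by
  refine ⟨fun h ↦ ?_, fun h ↦ funext fun i ↦ ?_⟩
  · have hdiag : diagonal (Function.const n (c : 𝕜)) = (c : 𝕜) • 1 :=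
      (smul_one_eq_diagonal _).symm
    rw [hA.spectral_theorem, h, Function.comp_const, hdiag, map_smul, map_one,
      RCLike.real_smul_eq_coe_smul (K := 𝕜)]
  · rw [hA.eigenvalues_eq]
    have hv : ‖hA.eigenvectorBasis i‖ = 1 := hA.eigenvectorBasis.orthonormal.1 i
    -- `set` hides the dependence of the eigenvector on `A`, so that `h` can be rewritten
    set v := hA.eigenvectorBasis i
    rw [h, smul_mulVec, one_mulVec, dotProduct_smul, dotProduct_comm,
      ← EuclideanSpace.inner_eq_star_dotProduct]
    simp [hv, RCLike.smul_re]

end Matrix.IsHermitian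

theorem lamMax_eq_ciSup {A : Matrix (Fin 3) (Fin 3) ℝ} (hA : A.IsHermitian) :
    lamMax A = ⨆ i, hA.eigenvalues i :=
  dif_pos hA

theorem kinetic_energy_eq_lamMax_iff (w : Fin 3 → ℝ) (U : Matrix (Fin 3) (Fin 3) ℝ)
    (hU : U.IsHermitian) (hTr : U.trace = 0) :
    (1 / 2) * (∑ i, w i ^ 2) = (3 / 2) * lamMax (Matrix.vecMulVec w w - U) ↔
      U = Matrix.vecMulVec w w -
        ((1 / 3) * ∑ i, w i ^ 2) • (1 : Matrix (Fin 3) (Fin 3) ℝ) := by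
  set S := ∑ i, w i ^ 2
  have hA : (vecMulVec w w - U).IsHermitian := by
    refine IsHermitian.sub ?_ hU
    simpa using (posSemidef_vecMulVec_self_star w).isHermitian
  have hmean : ∑ i, hA.eigenvalues i = Fintype.card (Fin 3) • (1 / 3 * S) := by
    have htrace := hA.trace_eq_sum_eigenvalues
    simp only [RCLike.ofReal_real_eq_id, id] at htrace
    rw [← htrace]
    simp [hTr, dotProduct, S, sq]
  rw [lamMax_eq_ciSup hA, eq_sub_iff_add_eq, ← eq_sub_iff_add_eq',
    eq_comm (a := (1 / 3 * S) • _), ← hA.eigenvalues_eq_const_iff,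
    ← ciSup_eq_iff_eq_const_of_sum_eq hmean]
  constructor <;> intro h <;> linarith
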